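/- arXiv:0906.1861 — 4 statements merged into one kernel-verified Lean document; each statement's English description precedes it below -/
import Mathlib

section
/- For every complex number a with a ∉ {1, 2} and all complex x, y with x ≠ 0, y ≠ 0 and |x| + |y| < 1, Appell's second hypergeometric function satisfies F₂(a; 1, 1; 2, 2; x, y) = (1 − (1−x)^{2−a} − (1−y)^{2−a} + (1−x−y)^{2−a}) / ((1−a)(2−a) x y), where all powers are principal branches. -/
/-!
Since `(1)_i / (2)_i = 1 / (i + 1)` and `(a - 2)_(n + 2) = (a - 2) (a - 1) (a)_n`, the series
`(1 - a) (2 - a) x y F₂(a; 1, 1; 2, 2; x, y)` is the part with `i, j ≥ 1` of the double series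
`∑ (a - 2)_(i + j) x^i y^j / (i! j!)`. Summed along the antidiagonals `i + j = n`, the binomial
theorem turns that double series into the binomial series of `(1 - x - y)^(2 - a)`; its two axes
`j = 0` and `i = 0` contribute `(1 - x)^(2 - a)` and `(1 - y)^(2 - a)`, which overlap in the
constant term `1`.
-/

/-- Pochhammer symbol `(z)_k = ∏_{i=0}^{k-1} (z + i)` for a complex number `z`. -/
noncomputable def poch (z : ℂ) (k : ℕ) : ℂ := ∏ i ∈ Finset.range k, (z + i)

/-- Appell's `F₂` double series. -/
noncomputable def appellF2 (a b₁ b₂ c₁ c₂ x y : ℂ) : ℂ :=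
  ∑' p : ℕ × ℕ, poch a (p.1 + p.2) * poch b₁ p.1 * poch b₂ p.2 /
    (poch c₁ p.1 * poch c₂ p.2 * (Nat.factorial p.1 : ℂ) * (Nat.factorial p.2 : ℂ)) *
    x ^ p.1 * y ^ p.2

open Finset Nat

theorem poch_eq_ascPochhammer_eval (z : ℂ) (k : ℕ) : poch z k = (ascPochhammer ℂ k).eval z := by
  induction k with
  | zero => simp [poch]
  | succ k ih => rw [poch, prod_range_succ, ← poch, ih, ascPochhammer_succ_eval]

theorem poch_succ_left (z : ℂ) (k : ℕ) : poch z (k + 1) = z * poch (z + 1) k := by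
  simp only [poch, prod_range_succ', cast_add, cast_one, cast_zero, add_zero, add_assoc,
    add_comm (1 : ℂ)]
  ring

theorem poch_one (k : ℕ) : poch 1 k = k ! := by
  rw [poch_eq_ascPochhammer_eval, ascPochhammer_eval_one]

theorem poch_two (k : ℕ) : poch 2 k = (k + 1)! := by
  rw [← one_add_one_eq_two, ← one_mul (poch (1 + 1) k), ← poch_succ_left, poch_one]

theorem poch_div_factorial_eq_choose (w : ℂ) (k : ℕ) :
    poch w k / k ! = Ring.choose (w + k - 1) k := by
  rw [div_eq_iff (mod_cast k.factorial_ne_zero), mul_comm, ← nsmul_eq_mul, ← Ring.multichoose_eq,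
    Ring.factorial_nsmul_multichoose_eq_ascPochhammer,
    Polynomial.ascPochhammer_smeval_eq_eval, poch_eq_ascPochhammer_eval]

theorem hasFPowerSeriesOnBall_one_sub_cpow_neg (w : ℂ) :
    HasFPowerSeriesOnBall (fun z => (1 - z) ^ (-w))
      (.ofScalars ℂ fun k => poch w k / k !) 0 1 := by
  simpa only [poch_div_factorial_eq_choose, one_div, ← Complex.cpow_neg] using
    Complex.one_div_one_sub_cpow_hasFPowerSeriesOnBall_zero w

theorem hasSum_poch_div_factorial_mul_pow (w : ℂ) {z : ℂ} (hz : ‖z‖ < 1) :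
    HasSum (fun k => poch w k / k ! * z ^ k) ((1 - z) ^ (-w)) := by
  simpa [FormalMultilinearSeries.ofScalars_apply_eq, mul_comm] using
    (hasFPowerSeriesOnBall_one_sub_cpow_neg w).hasSum (y := z) (by simpa [← ofReal_norm] using hz)

theorem summable_norm_poch_div_factorial_mul_pow (w : ℂ) {z : ℂ} (hz : ‖z‖ < 1) :
    Summable fun k => ‖poch w k / k ! * z ^ k‖ := by
  have hz' : (‖z‖ₑ : ENNReal) < 1 := by simpa [← ofReal_norm] using hz
  have h := FormalMultilinearSeries.summable_norm_apply _ (x := z)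
      (by simpa using hz'.trans_le (hasFPowerSeriesOnBall_one_sub_cpow_neg w).r_le)
  simpa only [FormalMultilinearSeries.ofScalars_apply_eq, smul_eq_mul] using h

theorem hasSum_of_summable_norm_sum_antidiagonal {E : Type*} [NormedAddCommGroup E]
    [CompleteSpace E] {f : ℕ × ℕ → E} {s : E}
    (hnorm : Summable fun n => ∑ p ∈ antidiagonal n, ‖f p‖)
    (hf : HasSum (fun n => ∑ p ∈ antidiagonal n, f p) s) : HasSum f s := by
  let e := HasAntidiagonal.sigmaAntidiagonalEquivProd (A := ℕ)
  have hsum : Summable f := by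
    refine Summable.of_norm (e.summable_iff.mp ?_)
    refine (summable_sigma_of_nonneg fun _ => norm_nonneg _).2 ⟨fun _ => .of_finite, ?_⟩
    simpa only [Function.comp_apply, e, HasAntidiagonal.sigmaAntidiagonalEquivProd_apply,
      Finset.tsum_subtype (antidiagonal _) (‖f ·‖)] using hnorm
  have hfiber := (e.hasSum_iff.mpr hsum.hasSum).sigma fun n => (antidiagonal n).hasSum f
  rw [hf.unique hfiber]
  exact hsum.hasSum

theorem HasSum.comp_add_one_add_one {E : Type*} [AddCommGroup E] [TopologicalSpace E]
    [IsTopologicalAddGroup E] {f : ℕ × ℕ → E} {s a b : E} (hf : HasSum f s)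
    (ha : HasSum (fun i => f (i, 0)) a) (hb : HasSum (fun j => f (0, j)) b) :
    HasSum (fun p : ℕ × ℕ => f (p.1 + 1, p.2 + 1)) (s - a - b + f (0, 0)) := by
  have hrow : HasSum (fun p : ℕ × ℕ => if p.2 = 0 then f (p.1, 0) else 0) a := by
    refine (Function.Injective.hasSum_iff (g := fun i => (i, 0)) (fun i j h => by simpa using h)
      ?_).mp (by simpa [Function.comp_def] using ha)
    rintro ⟨i, j⟩ hp
    simp_all [eq_comm]
  have hcol : HasSum (fun p : ℕ × ℕ => if p.1 = 0 then f (0, p.2) else 0) b := by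
    refine (Function.Injective.hasSum_iff (g := fun j => (0, j)) (fun i j h => by simpa using h)
      ?_).mp (by simpa [Function.comp_def] using hb)
    rintro ⟨i, j⟩ hp
    simp_all [eq_comm]
  have hrest := ((hf.sub hrow).sub hcol).add (hasSum_ite_eq (0 : ℕ × ℕ) (f (0, 0)))
  rw [← (Function.Injective.hasSum_iff (g := fun p : ℕ × ℕ => (p.1 + 1, p.2 + 1))
    (fun p q h => by simpa [Prod.ext_iff] using h) ?_)] at hrest
  · refine hrest.congr_fun fun p => ?_
    simp
  · rintro ⟨_ | i, _ | j⟩ hp <;> simp_all [Prod.ext_iff]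

theorem sum_antidiagonal_pow_mul_pow_div_factorial {K : Type*} [Field K] [CharZero K]
    (x y : K) (n : ℕ) :
    ∑ p ∈ antidiagonal n, x ^ p.1 * y ^ p.2 / (p.1 ! * p.2 !) = (x + y) ^ n / n ! := by
  rw [(Commute.all x y).add_pow', sum_div]
  refine sum_congr rfl fun p hp => ?_
  rw [← mem_antidiagonal.mp hp, nsmul_eq_mul, cast_add_choose]
  field_simp [(p.1 + p.2).factorial_ne_zero]

theorem sum_antidiagonal_poch_add (w x y : ℂ) (n : ℕ) :
    ∑ p ∈ antidiagonal n, poch w (p.1 + p.2) / (p.1 ! * p.2 !) * x ^ p.1 * y ^ p.2 =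
      poch w n / n ! * (x + y) ^ n := by
  rw [div_mul_eq_mul_div _ _ ((x + y) ^ n), mul_div_assoc,
    ← sum_antidiagonal_pow_mul_pow_div_factorial, mul_sum]
  refine sum_congr rfl fun p hp => ?_
  rw [mem_antidiagonal.mp hp]
  ring

theorem sum_antidiagonal_norm_poch_add (w x y : ℂ) (n : ℕ) :
    ∑ p ∈ antidiagonal n, ‖poch w (p.1 + p.2) / (p.1 ! * p.2 !) * x ^ p.1 * y ^ p.2‖ =
      ‖poch w n / n ! * ((‖x‖ + ‖y‖ : ℝ) : ℂ) ^ n‖ := by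
  rw [norm_mul, norm_pow, Complex.norm_real, Real.norm_of_nonneg (by positivity), norm_div,
    Complex.norm_natCast, div_mul_eq_mul_div _ _ ((‖x‖ + ‖y‖) ^ n), mul_div_assoc,
    ← sum_antidiagonal_pow_mul_pow_div_factorial, mul_sum]
  refine sum_congr rfl fun p hp => ?_
  simp only [norm_mul, norm_div, norm_pow, Complex.norm_natCast, mem_antidiagonal.mp hp]
  ring

theorem hasSum_poch_add_div_factorial_mul_pow_mul_pow (w : ℂ) {x y : ℂ} (hxy : ‖x‖ + ‖y‖ < 1) :
    HasSum (fun p : ℕ × ℕ => poch w (p.1 + p.2) / (p.1 ! * p.2 !) * x ^ p.1 * y ^ p.2)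
      ((1 - x - y) ^ (-w)) := by
  refine hasSum_of_summable_norm_sum_antidiagonal ?_ ?_
  · simp only [sum_antidiagonal_norm_poch_add]
    exact summable_norm_poch_div_factorial_mul_pow w (by
      rwa [Complex.norm_real, Real.norm_of_nonneg (by positivity)])
  · simp only [sum_antidiagonal_poch_add, sub_sub]
    exact hasSum_poch_div_factorial_mul_pow w ((norm_add_le x y).trans_lt hxy)

theorem poch_sub_two_add_two (a : ℂ) (n : ℕ) :
    poch (a - 2) (n + 2) = (a - 2) * (a - 1) * poch a n := by
  rw [poch_succ_left, poch_succ_left, show a - 2 + 1 + 1 = a by ring,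
    show a - 2 + 1 = a - 1 by ring, mul_assoc]

theorem stmt_1 (a x y : ℂ) (ha1 : a ≠ 1) (ha2 : a ≠ 2) (hx : x ≠ 0) (hy : y ≠ 0)
    (hxy : ‖x‖ + ‖y‖ < 1) :
    appellF2 a 1 1 2 2 x y =
      (1 - (1 - x) ^ (2 - a) - (1 - y) ^ (2 - a) + (1 - x - y) ^ (2 - a)) /
        ((1 - a) * (2 - a) * x * y) := by
  have hx1 : ‖x‖ < 1 := by linarith [norm_nonneg y]
  have hy1 : ‖y‖ < 1 := by linarith [norm_nonneg x]
  have hc : (1 - a) * (2 - a) * x * y ≠ 0 := by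
    simp [sub_eq_zero, hx, hy, ha1.symm, ha2.symm]
  have hsum := (hasSum_poch_add_div_factorial_mul_pow_mul_pow (a - 2) hxy).comp_add_one_add_one
    (by simpa using hasSum_poch_div_factorial_mul_pow (a - 2) hx1)
    (by simpa using hasSum_poch_div_factorial_mul_pow (a - 2) hy1)
  rw [neg_sub] at hsum
  refine (((hsum.div_const ((1 - a) * (2 - a) * x * y)).congr_fun fun p => ?_).tsum_eq).trans ?_
  · rw [poch_one, poch_one, poch_two, poch_two, add_add_add_comm, poch_sub_two_add_two]
    field_simp [factorial_ne_zero]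
    ring
  · simp only [poch, add_zero, range_zero, prod_empty, factorial_zero, cast_one, mul_one,
      pow_zero, div_one]
    ring
end

section
/- For all real numbers x, y with 0 < x, 0 < y and x + y < 1, Appell's second hypergeometric function satisfies F₂(1; 1, 1; 2, 2; x, y) = ((1−x−y)·ln(1−x−y) − (1−x)·ln(1−x) − (1−y)·ln(1−y)) / (x y). -/
/-- Pochhammer symbol `(x)_k = ∏_{i=0}^{k-1} (x + i)` for a real number `x`. -/
noncomputable def pochR (x : ℝ) (k : ℕ) : ℝ := ∏ i ∈ Finset.range k, (x + i)

/-- Appell's `F₂` double series (real version). -/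
noncomputable def appellF2R (a b₁ b₂ c₁ c₂ x y : ℝ) : ℝ :=
  ∑' p : ℕ × ℕ, pochR a (p.1 + p.2) * pochR b₁ p.1 * pochR b₂ p.2 /
    (pochR c₁ p.1 * pochR c₂ p.2 * (Nat.factorial p.1 : ℝ) * (Nat.factorial p.2 : ℝ)) *
    x ^ p.1 * y ^ p.2

/-!
Since `(1)_k = k!` and `(2)_k = (k+1)!`, the `(i, j)` term is `C(n+2, i+1) xⁱ yʲ / ((n+1)(n+2))`
with `n = i + j`. By the binomial theorem the terms with `i + j = n` add up to
`((x+y)ⁿ⁺² - xⁿ⁺² - yⁿ⁺²) / ((n+1)(n+2) x y)`, and partial fractions together with the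
logarithm series give `∑ₙ tⁿ⁺² / ((n+1)(n+2)) = t + (1-t) ln(1-t)`; the linear terms cancel.
All terms are positive, so summing along antidiagonals computes the double series.
-/

open Finset Real

theorem HasSum.of_sum_antidiagonal_of_nonneg {A : Type*} [AddMonoid A] [HasAntidiagonal A]
    {f : A × A → ℝ} (hf : 0 ≤ f) {a : ℝ}
    (h : HasSum (fun n ↦ ∑ p ∈ antidiagonal n, f p) a) : HasSum f a := by
  rw [← HasAntidiagonal.sigmaAntidiagonalEquivProd.hasSum_iff]
  have hfiber (n : A) : HasSum (fun p : antidiagonal n ↦ f p) (∑ p ∈ antidiagonal n, f p) :=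
    (antidiagonal n).hasSum f
  exact h.sigma_of_hasSum hfiber ((summable_sigma_of_nonneg fun _ ↦ hf _).2
    ⟨fun n ↦ (hfiber n).summable, h.summable.congr fun n ↦ (hfiber n).tsum_eq.symm⟩)

theorem pochR_succ (x : ℝ) (k : ℕ) : pochR x (k + 1) = pochR x k * (x + k) :=
  prod_range_succ _ _

theorem pochR_one (k : ℕ) : pochR 1 k = k.factorial := by
  induction k with
  | zero => simp [pochR]
  | succ k ih => rw [pochR_succ, ih, Nat.factorial_succ]; push_cast; ring

theorem pochR_two (k : ℕ) : pochR 2 k = (k + 1).factorial := by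
  induction k with
  | zero => simp [pochR]
  | succ k ih => rw [pochR_succ, ih, Nat.factorial_succ (k + 1)]; push_cast; ring

theorem appellF2R_one_one_one_two_two_term (x y : ℝ) (i j : ℕ) :
    pochR 1 (i + j) * pochR 1 i * pochR 1 j /
        (pochR 2 i * pochR 2 j * (i.factorial : ℝ) * (j.factorial : ℝ)) * x ^ i * y ^ j =
      ((i + j + 2).choose (i + 1) : ℝ) * x ^ i * y ^ j /
        ((((i + j : ℕ) : ℝ) + 1) * (((i + j : ℕ) : ℝ) + 2)) := by
  have hchoose : ((i + j + 2).choose (i + 1) : ℝ) * (i + 1).factorial * (j + 1).factorial =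
      (i + j + 2).factorial := by
    have := Nat.add_choose_mul_factorial_mul_factorial (j + 1) (i + 1)
    rw [show j + 1 + (i + 1) = i + j + 2 by ring] at this
    rw [mul_right_comm]
    exact_mod_cast this
  have hfact : ((i + j + 2).factorial : ℝ) = (i + j + 2) * (i + j + 1) * (i + j).factorial := by
    rw [Nat.factorial_succ, Nat.factorial_succ]; push_cast; ring
  rw [pochR_one, pochR_one, pochR_one, pochR_two, pochR_two]
  push_cast
  field_simp
  linear_combination (-(x ^ i * y ^ j)) * (hchoose + hfact)

theorem mul_mul_sum_antidiagonal_choose_mul_pow {R : Type*} [CommRing R] (x y : R) (n : ℕ) :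
    x * y * ∑ p ∈ antidiagonal n, ((n + 2).choose (p.1 + 1) : R) * x ^ p.1 * y ^ p.2 =
      (x + y) ^ (n + 2) - x ^ (n + 2) - y ^ (n + 2) := by
  rw [add_pow, sum_range_succ, sum_range_succ', Nat.sum_antidiagonal_eq_sum_range_succ_mk,
    mul_sum]
  simp only [Nat.choose_zero_right, Nat.choose_self, Nat.sub_zero, Nat.sub_self, pow_zero,
    Nat.cast_one, mul_one, one_mul, add_sub_cancel_right]
  refine sum_congr rfl fun i hi ↦ ?_
  rw [show n + 2 - (i + 1) = n - i + 1 by have := mem_range.1 hi; omega]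
  ring

theorem hasSum_pow_div_mul_succ_succ {t : ℝ} (ht : |t| < 1) :
    HasSum (fun n : ℕ ↦ t ^ (n + 2) / ((n + 1) * (n + 2))) (t + (1 - t) * log (1 - t)) := by
  have hlog := hasSum_pow_div_log_of_abs_lt_one ht
  have hshift : HasSum (fun n : ℕ ↦ t ^ (n + 2) / (n + 2)) (-log (1 - t) - t) := by
    have := (hasSum_nat_add_iff' 1).2 hlog
    simpa [add_assoc, one_add_one_eq_two] using this
  have hsplit (n : ℕ) : t ^ (n + 2) / ((n + 1) * (n + 2)) =
      t * (t ^ (n + 1) / (n + 1)) - t ^ (n + 2) / (n + 2) := by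
    field_simp
    ring
  simp only [hsplit]
  rw [show t + (1 - t) * log (1 - t) = t * -log (1 - t) - (-log (1 - t) - t) by ring]
  exact (hlog.mul_left t).sub hshift

theorem sum_antidiagonal_choose_mul_pow_div {x y : ℝ} (hx : x ≠ 0) (hy : y ≠ 0) (n : ℕ) :
    ∑ p ∈ antidiagonal n, ((p.1 + p.2 + 2).choose (p.1 + 1) : ℝ) * x ^ p.1 * y ^ p.2 /
        ((((p.1 + p.2 : ℕ) : ℝ) + 1) * (((p.1 + p.2 : ℕ) : ℝ) + 2)) =
      ((x + y) ^ (n + 2) - x ^ (n + 2) - y ^ (n + 2)) / ((n + 1) * (n + 2)) / (x * y) := by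
  calc _ = (∑ p ∈ antidiagonal n, ((n + 2).choose (p.1 + 1) : ℝ) * x ^ p.1 * y ^ p.2) /
          ((n + 1) * (n + 2)) := by
        rw [sum_div]
        refine sum_congr rfl fun p hp ↦ ?_
        rw [HasAntidiagonal.mem_antidiagonal.1 hp]
    _ = _ := by
        rw [← mul_mul_sum_antidiagonal_choose_mul_pow, div_right_comm,
          mul_div_cancel_left₀ _ (mul_ne_zero hx hy)]

theorem stmt_2 (x y : ℝ) (hx : 0 < x) (hy : 0 < y) (hxy : x + y < 1) :
    appellF2R 1 1 1 2 2 x y =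
      ((1 - x - y) * Real.log (1 - x - y) - (1 - x) * Real.log (1 - x)
        - (1 - y) * Real.log (1 - y)) / (x * y) := by
  have hseries {t : ℝ} (h0 : 0 < t) (h1 : t < 1) :=
    hasSum_pow_div_mul_succ_succ (abs_lt.2 ⟨by linarith, h1⟩)
  have hdiag := (((hseries (by positivity) hxy).sub (hseries hx (by linarith))).sub
    (hseries hy (by linarith))).div_const (x * y)
  simp only [← sub_div, ← sum_antidiagonal_choose_mul_pow_div hx.ne' hy.ne'] at hdiag
  have hterms := HasSum.of_sum_antidiagonal_of_nonneg (fun p ↦ by positivity) hdiag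
  have hF : appellF2R 1 1 1 2 2 x y = ∑' p : ℕ × ℕ, _ :=
    tsum_congr fun p ↦ appellF2R_one_one_one_two_two_term x y p.1 p.2
  rw [hF, hterms.tsum_eq, show 1 - (x + y) = 1 - x - y by ring]
  ring
end

section
/- Let a be a real number with a < 1, and let x ∈ (0, 1/2) be real. Then lim_{t→1⁻} F₂(a; 1, 1; 2, 2; t x, t(1−x)) − (1/(1−a)) (1−x)^{−a} ₂F₁(1, a−1; 2; x/(x−1)) = − x^{2−a} / ((1−a)(2−a) x (1−x)), and this difference is nonzero. In particular, the claimed formula F₂(a; b₁, b₂; c₁, c₂; x, 1−x) = (Γ(c₂)Γ(c₂−a−b₂)/(Γ(c₂−a)Γ(c₂−b₂))) (1−x)^{−a} ₃F₂(a, c₁−b₁, a−c₂+1; c₁, a+b₂−c₂+1; x/(x−1)) is false for the parameters (a; 1, 1; 2, 2), even though the hypothesis Re(c₂−a−b₂) > 0 holds. -/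
/-!
Put `b = a - 2`. Since `(a - 2)(a - 1)(a)ₖ = (b)ₖ₊₂`, the double series
`(a - 2)(a - 1) u v F₂(a; 1, 1; 2, 2; u, v)` is the part with `m, n ≥ 1` of
`∑ (b)ₘ₊ₙ / (m! n!) uᵐ vⁿ`, and summing that series along antidiagonals turns it into the
binomial series of `(1 - u - v)^(-b)`. Removing the row `n = 0` and the column `m = 0`
(both binomial series again) gives
`(a - 2)(a - 1) u v F₂ = (1 - u - v)^(2 - a) - (1 - u)^(2 - a) - (1 - v)^(2 - a) + 1`,
and in the same way `(a - 2) z ₂F₁(1, a - 1; 2; z) = (1 - z)^(2 - a) - 1`.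
For `a < 2` the closed form of `F₂` is continuous up to the boundary `u + v = 1`, which gives
the limit; comparing it with the `₂F₁` side at `z = x / (x - 1)`, where `1 - z = (1 - x)⁻¹`,
leaves the stated defect.
-/

open Topology Filter

/-- Gauss hypergeometric series `₂F₁(a,b;c;x)` (real version). -/
noncomputable def hyp2F1R (a b c x : ℝ) : ℝ :=
  ∑' k : ℕ, pochR a k * pochR b k / (pochR c k * (Nat.factorial k : ℝ)) * x ^ k

open Finset Nat

lemma pochR_succ_left (x : ℝ) (n : ℕ) : pochR x (n + 1) = x * pochR (x + 1) n := by
  rw [pochR, prod_range_succ', mul_comm, pochR]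
  simp [add_assoc, add_comm (1 : ℝ)]

lemma pochR_add_two (x : ℝ) (n : ℕ) : pochR x (n + 2) = x * (x + 1) * pochR (x + 2) n := by
  rw [pochR_succ_left, pochR_succ_left, add_assoc, one_add_one_eq_two, mul_assoc]

lemma pochR_one_s7 (n : ℕ) : pochR 1 n = n ! := by
  induction n with
  | zero => simp [pochR]
  | succ n ih => rw [pochR, prod_range_succ, ← pochR, ih]; push_cast [factorial_succ]; ring

lemma pochR_two_s7 (n : ℕ) : pochR 2 n = (n + 1)! := by
  rw [← pochR_one_s7, pochR_succ_left]
  norm_num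

lemma abs_pochR_le (x : ℝ) (n : ℕ) : |pochR x n| ≤ pochR |x| n := by
  rw [pochR, abs_prod]
  exact prod_le_prod (fun _ _ => abs_nonneg _) fun i _ => (abs_add_le _ _).trans (by simp)

lemma pochR_eq_ascPochhammer_eval (x : ℝ) (n : ℕ) :
    pochR x n = (ascPochhammer ℝ n).eval x := by
  induction n with
  | zero => simp [pochR]
  | succ n ih => rw [pochR, prod_range_succ, ← pochR, ih, ascPochhammer_succ_eval]

lemma ringChoose_add_sub_one_eq_pochR_div (b : ℝ) (n : ℕ) :
    Ring.choose (b + n - 1) n = pochR b n / n ! := by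
  rw [← Ring.multichoose_eq, pochR_eq_ascPochhammer_eval,
    ← Polynomial.ascPochhammer_smeval_eq_eval,
    ← Ring.factorial_nsmul_multichoose_eq_ascPochhammer,
    nsmul_eq_mul, mul_div_cancel_left₀]
  exact_mod_cast factorial_ne_zero n

lemma hasSum_pochR_div_factorial_mul_pow (b : ℝ) {w : ℝ} (hw : |w| < 1) :
    HasSum (fun n => pochR b n / n ! * w ^ n) ((1 - w) ^ (-b)) := by
  have := (Real.one_div_one_sub_rpow_hasFPowerSeriesOnBall_zero b).hasSum (y := w)
    (by simpa [enorm_eq_nnnorm, ← NNReal.coe_lt_coe] using hw)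
  rw [Real.rpow_neg (by linarith [abs_lt.1 hw])]
  simpa [FormalMultilinearSeries.ofScalars_apply_eq, ringChoose_add_sub_one_eq_pochR_div, mul_comm]
    using this

section Antidiagonal

variable {E : Type*} [AddCommMonoid E] [TopologicalSpace E] [ContinuousAdd E] [RegularSpace E]

lemma Summable.hasSum_sum_antidiagonal {f : ℕ × ℕ → E} (hf : Summable f) :
    HasSum (fun n => ∑ kl ∈ antidiagonal n, f kl) (∑' p, f p) := by
  have hσ := HasAntidiagonal.sigmaAntidiagonalEquivProd.hasSum_iff.2 hf.hasSum
  exact hσ.sigma fun n => by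
    simpa [sum_attach] using hasSum_fintype fun kl : antidiagonal n => f kl

end Antidiagonal

lemma summable_prod_of_summable_sum_antidiagonal {f : ℕ × ℕ → ℝ} (hf : 0 ≤ f)
    (h : Summable fun n => ∑ kl ∈ antidiagonal n, f kl) : Summable f := by
  rw [← HasAntidiagonal.sigmaAntidiagonalEquivProd.summable_iff]
  refine (summable_sigma_of_nonneg fun _ => hf _).2 ⟨fun n => (hasSum_fintype _).summable, ?_⟩
  simpa [tsum_fintype, sum_attach] using h

section Shift

variable {E : Type*} [AddCommGroup E] [UniformSpace E] [IsUniformAddGroup E] [CompleteSpace E]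
  [T2Space E]

lemma Summable.tsum_prod_succ_succ {f : ℕ × ℕ → E} (hf : Summable f) :
    ∑' p : ℕ × ℕ, f (p.1 + 1, p.2 + 1) =
      ∑' p, f p - ∑' i, f (i, 0) - ∑' j, f (0, j) + f (0, 0) := by
  have hrow : ∀ i, Summable fun j => f (i, j) := hf.prod_factor
  have hcol : Summable fun i => f (i, 0) :=
    hf.comp_injective fun i i' h => (Prod.ext_iff.1 h).1
  have hshift : Summable fun p : ℕ × ℕ => f (p.1 + 1, p.2 + 1) :=
    hf.comp_injective fun p q h => by simp only [Prod.ext_iff] at h ⊢; omega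
  calc ∑' p : ℕ × ℕ, f (p.1 + 1, p.2 + 1)
      = ∑' i, ∑' j, f (i + 1, j + 1) :=
        hshift.tsum_prod' fun i => (hrow (i + 1)).comp_injective (add_left_injective 1)
    _ = ∑' i, (∑' j, f (i + 1, j) - f (i + 1, 0)) :=
        tsum_congr fun i => by rw [(hrow (i + 1)).tsum_eq_zero_add]; abel
    _ = ∑' i, ∑' j, f (i + 1, j) - ∑' i, f (i + 1, 0) :=
        (hf.prod.comp_injective (add_left_injective 1)).tsum_sub
          (hcol.comp_injective (add_left_injective 1))
    _ = ∑' p, f p - ∑' i, f (i, 0) - ∑' j, f (0, j) + f (0, 0) := by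
        rw [hf.tsum_prod' hrow, hf.prod.tsum_eq_zero_add, hcol.tsum_eq_zero_add]
        abel

end Shift

noncomputable def negBinomialTerm₂ (b u v : ℝ) (p : ℕ × ℕ) : ℝ :=
  pochR b (p.1 + p.2) / (p.1 ! * p.2 !) * u ^ p.1 * v ^ p.2

lemma negBinomialTerm₂_zero_right (b u v : ℝ) (i : ℕ) :
    negBinomialTerm₂ b u v (i, 0) = pochR b i / i ! * u ^ i := by
  simp [negBinomialTerm₂]

lemma negBinomialTerm₂_zero_left (b u v : ℝ) (j : ℕ) :
    negBinomialTerm₂ b u v (0, j) = pochR b j / j ! * v ^ j := by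
  simp [negBinomialTerm₂]

lemma sum_antidiagonal_negBinomialTerm₂ (b u v : ℝ) (n : ℕ) :
    ∑ kl ∈ antidiagonal n, negBinomialTerm₂ b u v kl = pochR b n / n ! * (u + v) ^ n := by
  rw [(Commute.all u v).add_pow', mul_sum]
  refine sum_congr rfl fun ⟨i, j⟩ hij => ?_
  rw [HasAntidiagonal.mem_antidiagonal] at hij
  subst hij
  dsimp only
  rw [negBinomialTerm₂, nsmul_eq_mul, ← Nat.add_choose_mul_factorial_mul_factorial,
    choose_symm_add]
  have : ((i + j).choose j : ℝ) ≠ 0 := by exact_mod_cast (choose_pos (by omega)).ne'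
  push_cast
  field_simp

lemma abs_negBinomialTerm₂_le (b u v : ℝ) (p : ℕ × ℕ) :
    |negBinomialTerm₂ b u v p| ≤ negBinomialTerm₂ |b| |u| |v| p := by
  simp only [negBinomialTerm₂, abs_mul, abs_div, abs_pow, Nat.abs_cast]
  gcongr
  exact abs_pochR_le b _

lemma hasSum_negBinomialTerm₂ (b : ℝ) {u v : ℝ} (huv : |u| + |v| < 1) :
    HasSum (negBinomialTerm₂ b u v) ((1 - u - v) ^ (-b)) := by
  have hdom : Summable (negBinomialTerm₂ |b| |u| |v|) := by
    refine summable_prod_of_summable_sum_antidiagonal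
      (fun p => (abs_nonneg _).trans (abs_negBinomialTerm₂_le b u v p)) ?_
    simp_rw [sum_antidiagonal_negBinomialTerm₂]
    exact (hasSum_pochR_div_factorial_mul_pow |b|
      (by rwa [abs_of_nonneg (by positivity)])).summable
  have hsum : Summable (negBinomialTerm₂ b u v) :=
    hdom.of_norm_bounded (abs_negBinomialTerm₂_le b u v)
  have hdiag := hsum.hasSum_sum_antidiagonal
  simp_rw [sum_antidiagonal_negBinomialTerm₂] at hdiag
  have huv' : |u + v| < 1 := (abs_add_le u v).trans_lt huv
  rw [sub_sub, (hasSum_pochR_div_factorial_mul_pow b huv').unique hdiag]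
  exact hsum.hasSum

lemma mul_appellF2R_one_one_two_two (a : ℝ) {u v : ℝ} (huv : |u| + |v| < 1) :
    (a - 2) * (a - 1) * u * v * appellF2R a 1 1 2 2 u v =
      (1 - u - v) ^ (2 - a) - (1 - u) ^ (2 - a) - (1 - v) ^ (2 - a) + 1 := by
  have hG := hasSum_negBinomialTerm₂ (a - 2) huv
  have hrow := hasSum_pochR_div_factorial_mul_pow (a - 2) (w := u) (by linarith [abs_nonneg v])
  have hcol := hasSum_pochR_div_factorial_mul_pow (a - 2) (w := v) (by linarith [abs_nonneg u])
  have hterm : ∀ p : ℕ × ℕ, (a - 2) * (a - 1) * u * v * (pochR a (p.1 + p.2) * pochR 1 p.1 *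
      pochR 1 p.2 / (pochR 2 p.1 * pochR 2 p.2 * p.1 ! * p.2 !) * u ^ p.1 * v ^ p.2) =
      negBinomialTerm₂ (a - 2) u v (p.1 + 1, p.2 + 1) := by
    rintro ⟨i, j⟩
    rw [negBinomialTerm₂, show i + 1 + (j + 1) = i + j + 2 by ring, pochR_add_two, sub_add_cancel,
      pochR_one_s7, pochR_one_s7, pochR_two_s7, pochR_two_s7]
    push_cast [factorial_succ]
    field_simp
    ring
  rw [appellF2R, ← tsum_mul_left, tsum_congr hterm, hG.summable.tsum_prod_succ_succ, hG.tsum_eq]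
  simp_rw [negBinomialTerm₂_zero_right, negBinomialTerm₂_zero_left, hrow.tsum_eq, hcol.tsum_eq]
  simp [pochR]

lemma mul_hyp2F1R_one_sub_one_two (a : ℝ) {z : ℝ} (hz : |z| < 1) :
    (a - 2) * z * hyp2F1R 1 (a - 1) 2 z = (1 - z) ^ (2 - a) - 1 := by
  have h := (hasSum_nat_add_iff' 1).2 (hasSum_pochR_div_factorial_mul_pow (a - 2) hz)
  have hterm : ∀ k : ℕ,
      (a - 2) * z * (pochR 1 k * pochR (a - 1) k / (pochR 2 k * k !) * z ^ k) =
      pochR (a - 2) (k + 1) / (k + 1)! * z ^ (k + 1) := by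
    intro k
    rw [pochR_succ_left, show a - 2 + 1 = a - 1 by ring, pochR_one_s7, pochR_two_s7]
    push_cast [factorial_succ]
    field_simp
    ring
  rw [hyp2F1R, ← tsum_mul_left, tsum_congr hterm, h.tsum_eq]
  simp [pochR]

lemma tendsto_appellF2R_one_one_two_two {a x y : ℝ} (ha1 : a ≠ 1) (ha2 : a < 2) (hx : 0 < x)
    (hy : 0 < y) (hxy : x + y ≤ 1) :
    Tendsto (fun t => appellF2R a 1 1 2 2 (t * x) (t * y)) (𝓝[<] 1)
      (𝓝 (((1 - x - y) ^ (2 - a) - (1 - x) ^ (2 - a) - (1 - y) ^ (2 - a) + 1) /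
        ((a - 2) * (a - 1) * x * y))) := by
  have hpow : ∀ {f : ℝ → ℝ}, Continuous f → Continuous fun t => f t ^ (2 - a) :=
    fun hf => hf.rpow_const fun _ => Or.inr (by linarith)
  have hN : Continuous fun t : ℝ =>
      (1 - t * x - t * y) ^ (2 - a) - (1 - t * x) ^ (2 - a) - (1 - t * y) ^ (2 - a) + 1 := by
    fun_prop (disch := exact hpow)
  have ha1' : a - 1 ≠ 0 := sub_ne_zero.2 ha1
  have ha2' : a - 2 ≠ 0 := by linarith
  have hlim := ((hN.tendsto 1).div ((by fun_prop : Continuous fun t : ℝ =>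
    (a - 2) * (a - 1) * (t * x) * (t * y)).tendsto 1) (by positivity)).mono_left
    (nhdsWithin_le_nhds (s := Set.Iio 1))
  simp only [one_mul] at hlim
  refine hlim.congr' ?_
  filter_upwards [Ioo_mem_nhdsLT zero_lt_one] with t ⟨ht0, ht1⟩
  rw [Pi.div_apply, eq_comm, eq_div_iff (by positivity), mul_comm, mul_appellF2R_one_one_two_two]
  rw [abs_of_pos (by positivity), abs_of_pos (by positivity)]
  nlinarith

lemma mul_hyp2F1R_one_sub_one_two_div_sub_one (a : ℝ) {x : ℝ} (hx0 : 0 < x) (hx1 : x < 1 / 2) :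
    (a - 2) * (x / (x - 1)) * hyp2F1R 1 (a - 1) 2 (x / (x - 1)) = ((1 - x) ^ (2 - a))⁻¹ - 1 := by
  have hz : |x / (x - 1)| < 1 := by
    rw [abs_div, abs_of_pos hx0, abs_of_neg (by linarith), div_lt_one (by linarith)]
    linarith
  have h1x : 1 - x ≠ 0 := by linarith
  have hx1' : x - 1 ≠ 0 := by linarith
  rw [mul_hyp2F1R_one_sub_one_two a hz, ← Real.inv_rpow (by linarith)]
  congr 2
  field_simp
  ring

theorem stmt_7 (a x : ℝ) (ha : a < 1) (hx0 : 0 < x) (hx1 : x < 1 / 2) :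
    Tendsto (fun t : ℝ => appellF2R a 1 1 2 2 (t * x) (t * (1 - x))) (𝓝[<] 1)
      (𝓝 (1 / (1 - a) * (1 - x) ^ (-a) * hyp2F1R 1 (a - 1) 2 (x / (x - 1)) +
        -(x ^ (2 - a) / ((1 - a) * (2 - a) * x * (1 - x))))) ∧
    -(x ^ (2 - a) / ((1 - a) * (2 - a) * x * (1 - x))) ≠ 0 := by
  have h1x : 0 < 1 - x := by linarith
  have h1a : 0 < 1 - a := by linarith
  have h2a : 0 < 2 - a := by linarith
  have ha1 : a - 1 ≠ 0 := by linarith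
  have ha2 : a - 2 ≠ 0 := by linarith
  have hx1' : x - 1 ≠ 0 := by linarith
  refine ⟨?_, neg_ne_zero.2 (by positivity)⟩
  convert tendsto_appellF2R_one_one_two_two ha.ne (by linarith) hx0 h1x (by linarith) using 2
  have hH := mul_hyp2F1R_one_sub_one_two_div_sub_one a hx0 hx1
  have hQ : (1 - x) ^ (-a) = (1 - x) ^ (2 - a) / (1 - x) ^ 2 := by
    rw [← Real.rpow_natCast, ← Real.rpow_sub h1x]
    norm_num
  have hP : (1 - x) ^ (2 - a) ≠ 0 := by positivity
  rw [mul_comm] at hH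
  rw [eq_div_of_mul_eq (by positivity) hH, hQ, sub_sub_cancel, sub_self, Real.zero_rpow h2a.ne']
  field_simp
  ring
end

section
/- Let a₁, a₂, b₁, b₂, c be complex numbers with Re(c − a₂ − b₂) > 0, with c, c − a₂ and c − b₂ not nonpositive integers, and let x be complex with |x| < 1. Then Appell's F₃ double series converges at (x, 1), and F₃(a₁, a₂; b₁, b₂; c; x, 1) = (Γ(c) Γ(c−a₂−b₂) / (Γ(c−a₂) Γ(c−b₂))) · ₃F₂(a₁, b₁, c−a₂−b₂; c−a₂, c−b₂; x). -/
/-- Terms of Appell's `F₃` double series. -/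
noncomputable def appellF3Term (a₁ a₂ b₁ b₂ c x y : ℂ) (p : ℕ × ℕ) : ℂ :=
  poch a₁ p.1 * poch a₂ p.2 * poch b₁ p.1 * poch b₂ p.2 /
    (poch c (p.1 + p.2) * (Nat.factorial p.1 : ℂ) * (Nat.factorial p.2 : ℂ)) *
    x ^ p.1 * y ^ p.2

/-- Appell's `F₃` double series. -/
noncomputable def appellF3 (a₁ a₂ b₁ b₂ c x y : ℂ) : ℂ :=
  ∑' p : ℕ × ℕ, appellF3Term a₁ a₂ b₁ b₂ c x y p

/-- Generalized hypergeometric series `₃F₂(a₁,a₂,a₃; b₁,b₂; x)`. -/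
noncomputable def hyp3F2 (a₁ a₂ a₃ b₁ b₂ x : ℂ) : ℂ :=
  ∑' k : ℕ, poch a₁ k * poch a₂ k * poch a₃ k /
    (poch b₁ k * poch b₂ k * (Nat.factorial k : ℂ)) * x ^ k

open Filter Finset Topology Asymptotics

/-!
Summing over `j` first, `F₃(a₁, a₂; b₁, b₂; c; x, 1)` becomes
`∑ᵢ (a₁)ᵢ (b₁)ᵢ / ((c)ᵢ i!) xⁱ · ₂F₁(a₂, b₂; c + i; 1)`. Gauss's theorem evaluates each inner
series as a quotient of Γ-values, and `Γ(z + i) = (z)ᵢ Γ(z)` turns the outer series into the `₃F₂`.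

Gauss's theorem is proved from the contiguous relation `c (c-a-b) F(c) = (c-a)(c-b) F(c+1)` for
`F(c) = ₂F₁(a, b; c; 1)`: iterating it `n + 1` times and multiplying by Euler's sequences
`GammaSeq` gives `Γₙ(c-a) Γₙ(c-b) F(c) = Γₙ(c) Γₙ(c-a-b) F(c+n+1)`, and `F(c+n) → 1` by dominated
convergence. Convergence at `1` follows from Raabe's test, and the inner sums are bounded
uniformly in `i` once `Re(c + i)` is large, which gives absolute convergence of the double series.
-/

@[simp] lemma poch_zero (z : ℂ) : poch z 0 = 1 := by simp [poch]

lemma poch_succ (z : ℂ) (n : ℕ) : poch z (n + 1) = poch z n * (z + n) :=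
  prod_range_succ _ _

lemma poch_add (z : ℂ) (m n : ℕ) : poch z (m + n) = poch z m * poch (z + m) n := by
  simp only [poch, prod_range_add, Nat.cast_add, add_assoc]

lemma poch_eq_eval_ascPochhammer (z : ℂ) (n : ℕ) : poch z n = (ascPochhammer ℂ n).eval z := by
  induction n with
  | zero => simp
  | succ n ih => rw [poch_succ, ih, ascPochhammer_succ_eval]

lemma add_natCast_ne_zero {z : ℂ} (hz : ∀ k : ℕ, z ≠ -k) (k : ℕ) : z + k ≠ 0 :=
  fun h => hz k (eq_neg_of_add_eq_zero_left h)

lemma add_natCast_ne_neg_natCast {z : ℂ} (hz : ∀ k : ℕ, z ≠ -k) (n : ℕ) :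
    ∀ k : ℕ, z + n ≠ -k :=
  fun k h => hz (n + k) (by push_cast; linear_combination h)

lemma ne_neg_natCast_of_re_pos {z : ℂ} (hz : 0 < z.re) : ∀ k : ℕ, z ≠ -k := by
  rintro k rfl
  simp only [Complex.neg_re, Complex.natCast_re, Left.neg_pos_iff] at hz
  linarith [k.cast_nonneg (α := ℝ)]

lemma poch_ne_zero {z : ℂ} (hz : ∀ k : ℕ, z ≠ -k) (n : ℕ) : poch z n ≠ 0 :=
  prod_ne_zero_iff.2 fun k _ => add_natCast_ne_zero hz k

lemma Gamma_add_natCast {z : ℂ} (hz : ∀ k : ℕ, z ≠ -k) (n : ℕ) :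
    Complex.Gamma (z + n) = poch z n * Complex.Gamma z := by
  rw [poch_eq_eval_ascPochhammer, ← Complex.Gamma_add_nat_div_Gamma_eq z hz,
    div_mul_cancel₀ _ (Complex.Gamma_ne_zero hz)]

lemma GammaSeq_mul_poch {z : ℂ} (hz : ∀ k : ℕ, z ≠ -k) (n : ℕ) :
    Complex.GammaSeq z n * poch z (n + 1) = (n : ℂ) ^ z * n.factorial :=
  div_mul_cancel₀ _ (poch_ne_zero hz (n + 1))

lemma re_sub_sub_add_natCast_pos {a b c : ℂ} (hre : 0 < (c - a - b).re) (n : ℕ) :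
    0 < (c + n - a - b).re := by
  simp only [Complex.sub_re, Complex.add_re, Complex.natCast_re] at hre ⊢
  linarith [n.cast_nonneg (α := ℝ)]

lemma tendsto_mul_natCast_add_atTop {A : ℝ} (hA : 0 < A) (B : ℝ) :
    Tendsto (fun n : ℕ => A * n + B) atTop atTop :=
  tendsto_atTop_add_const_right _ B (tendsto_natCast_atTop_atTop.const_mul_atTop hA)

lemma tendsto_re_add_natCast_atTop (c : ℂ) : Tendsto (fun n : ℕ => (c + n).re) atTop atTop := by
  simpa [add_comm] using tendsto_mul_natCast_add_atTop one_pos c.re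

lemma tendsto_norm_add_natCast_atTop (c : ℂ) : Tendsto (fun n : ℕ => ‖c + n‖) atTop atTop :=
  tendsto_atTop_mono (fun n => Complex.re_le_norm (c + n)) (tendsto_re_add_natCast_atTop c)

lemma tendsto_inv_add_natCast (c : ℂ) : Tendsto (fun n : ℕ => (c + n)⁻¹) atTop (𝓝 0) :=
  tendsto_zero_iff_norm_tendsto_zero.2 <| by
    simp only [norm_inv]
    exact tendsto_inv_atTop_zero.comp (tendsto_norm_add_natCast_atTop c)

lemma eventually_norm_add_natCast_le (a : ℂ) {d : ℝ} (hd : 0 < d) :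
    ∀ᶠ n : ℕ in atTop, ‖a + n‖ ≤ n + (a.re + d) := by
  filter_upwards [(tendsto_mul_natCast_add_atTop (by positivity : 0 < 2 * d)
    (2 * d * a.re + d ^ 2 - a.im ^ 2)).eventually_ge_atTop 0,
    (tendsto_mul_natCast_add_atTop one_pos (a.re + d)).eventually_ge_atTop 0] with n h hpos
  rw [Complex.norm_def, Complex.normSq_apply, Real.sqrt_le_left (by linarith)]
  simp only [Complex.add_re, Complex.natCast_re, Complex.add_im, Complex.natCast_im, add_zero]
  nlinarith

lemma eventually_norm_mul_norm_mul_le {a b c : ℂ} {p q r : ℝ}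
    (h : a.re + b.re + p < c.re + q + r) :
    ∀ᶠ n : ℕ in atTop, ‖a + n‖ * ‖b + n‖ * (n + p) ≤ ‖c + n‖ * ((n + q) * (n + r)) := by
  obtain ⟨d, hd, hgap⟩ : ∃ d : ℝ, 0 < d ∧ 3 * d = c.re + q + r - (a.re + b.re + p) :=
    ⟨_, by linarith, mul_div_cancel₀ _ three_ne_zero⟩
  -- the difference of the two real cubics, a quadratic in `n` with leading coefficient `d`
  have hcubic := (tendsto_atTop_add_const_right _ (c.re * q * r - (a.re + d) * (b.re + d) * p)
    ((tendsto_mul_natCast_add_atTop hd (c.re * q + c.re * r + q * r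
      - (a.re + d) * (b.re + d) - (a.re + d) * p - (b.re + d) * p)).atTop_mul_atTop₀
      tendsto_natCast_atTop_atTop)).eventually_ge_atTop 0
  have hnonneg (t : ℝ) : ∀ᶠ n : ℕ in atTop, 0 ≤ n + t :=
    (tendsto_atTop_add_const_right _ t tendsto_natCast_atTop_atTop).eventually_ge_atTop 0
  filter_upwards [eventually_norm_add_natCast_le a hd, eventually_norm_add_natCast_le b hd,
    hcubic, hnonneg p, hnonneg q, hnonneg r] with n ha hb hn hp hq hr
  calc ‖a + n‖ * ‖b + n‖ * (n + p) ≤ (n + (a.re + d)) * (n + (b.re + d)) * (n + p) := by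
        gcongr
        exact (norm_nonneg _).trans ha
    _ ≤ (n + c.re) * ((n + q) * (n + r)) := by linear_combination hn + (n : ℝ) ^ 2 * hgap
    _ ≤ ‖c + n‖ * ((n + q) * (n + r)) := by
        gcongr
        simpa [add_comm] using Complex.re_le_norm (c + n)

lemma isBigO_of_norm_succ_mul_le {E : Type*} [SeminormedAddCommGroup E] {f : ℕ → E}
    {g : ℕ → ℝ} (hg : ∀ n, 0 < g n)
    (h : ∀ᶠ n in atTop, ‖f (n + 1)‖ * g n ≤ ‖f n‖ * g (n + 1)) : f =O[atTop] g := by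
  obtain ⟨N, hN⟩ := eventually_atTop.1 h
  have hdecr : ∀ n, N ≤ n → ‖f n‖ / g n ≤ ‖f N‖ / g N := by
    intro n hn
    induction n, hn using Nat.le_induction with
    | base => rfl
    | succ n hn ih =>
      refine le_trans ?_ ih
      rw [div_le_div_iff₀ (hg _) (hg _)]
      exact hN n hn
  refine IsBigO.of_bound (‖f N‖ / g N) (eventually_atTop.2 ⟨N, fun n hn => ?_⟩)
  rw [Real.norm_of_nonneg (hg n).le, ← div_le_iff₀ (hg n)]
  exact hdecr n hn

lemma eq_zero_of_summable_of_tendsto_nsmul {E : Type*} [NormedAddCommGroup E] {t : ℕ → E}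
    {ℓ : E} (ht : Summable fun n => ‖t n‖) (h : Tendsto (fun n : ℕ => n • t n) atTop (𝓝 ℓ)) :
    ℓ = 0 := by
  by_contra hℓ
  have hℓ' : 0 < ‖ℓ‖ := norm_pos_iff.2 hℓ
  refine Real.not_summable_natCast_inv (Summable.of_norm_bounded_eventually_nat
    (ht.mul_left (2 / ‖ℓ‖)) ?_)
  filter_upwards [h.norm.eventually_const_le (half_lt_self hℓ'), eventually_ge_atTop 1]
    with n hn hn1
  have hn0 : (0 : ℝ) < n := by exact_mod_cast hn1
  rw [Real.norm_of_nonneg (by positivity), inv_eq_one_div, div_le_iff₀ hn0]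
  calc (1 : ℝ) = 2 / ‖ℓ‖ * (‖ℓ‖ / 2) := by field_simp
    _ ≤ 2 / ‖ℓ‖ * (n * ‖t n‖) := by gcongr; exact hn.trans norm_nsmul_le
    _ = 2 / ‖ℓ‖ * ‖t n‖ * n := by ring

lemma summable_two_div_add_one_mul_add_two :
    Summable fun n : ℕ => 2 / (((n : ℝ) + 1) * ((n : ℝ) + 2)) := by
  have h : Summable fun n : ℕ => 2 * (((n : ℝ) + 1) ^ 2)⁻¹ := by
    simpa using ((summable_nat_add_iff 1).2 (Real.summable_nat_pow_inv.2 one_lt_two)).mul_left 2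
  refine h.of_nonneg_of_le (fun n => by positivity) fun n => ?_
  rw [← div_eq_mul_inv, sq]
  gcongr
  linarith

noncomputable def hyp2F1Coeff (a b c : ℂ) (n : ℕ) : ℂ :=
  poch a n * poch b n / (poch c n * n.factorial)

section hyp2F1Coeff

variable {a b c : ℂ}

variable (a b c) in
@[simp] lemma hyp2F1Coeff_zero : hyp2F1Coeff a b c 0 = 1 := by simp [hyp2F1Coeff]

variable (a b c) in
lemma hyp2F1Coeff_succ (n : ℕ) : hyp2F1Coeff a b c (n + 1)
    = hyp2F1Coeff a b c n * ((a + n) * (b + n) / ((c + n) * (n + 1))) := by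
  simp only [hyp2F1Coeff, poch_succ, Nat.factorial_succ, Nat.cast_mul, Nat.cast_succ]
  rw [div_mul_div_comm]
  ring_nf

variable (a b c) in
lemma norm_hyp2F1Coeff_succ (n : ℕ) : ‖hyp2F1Coeff a b c (n + 1)‖ =
    ‖hyp2F1Coeff a b c n‖ * (‖a + n‖ * ‖b + n‖ / (‖c + n‖ * (n + 1))) := by
  rw [hyp2F1Coeff_succ, norm_mul, norm_div, norm_mul, norm_mul]
  norm_cast

/-- Raabe's test, against the majorant `(n + 1) ^ (-(1 + s))` with `2 s = Re (c - a - b)`. -/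
lemma summable_norm_hyp2F1Coeff (hre : 0 < (c - a - b).re) :
    Summable fun n => ‖hyp2F1Coeff a b c n‖ := by
  set s := (c - a - b).re / 2
  have hs : 0 < s := by positivity
  have hg : Summable fun n : ℕ => (((n : ℝ) + 1) ^ (1 + s))⁻¹ := by
    simpa using (summable_nat_add_iff 1).2 (Real.summable_nat_rpow_inv.2 (by linarith : 1 < 1 + s))
  refine summable_of_isBigO_nat hg
    (isBigO_of_norm_succ_mul_le (fun n => by positivity) ?_).norm_left
  have hcre : a.re + b.re + 2 < c.re + 1 + (1 - s) := by
    simp only [s, Complex.sub_re] at hs ⊢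
    linarith
  filter_upwards [eventually_norm_mul_norm_mul_le hcre,
    (tendsto_norm_add_natCast_atTop c).eventually_gt_atTop 0] with n hn hc
  have hbernoulli : ((n : ℝ) + (1 - s)) / (n + 2)
      ≤ ((n : ℝ) + 1) ^ (1 + s) / ((n : ℝ) + 2) ^ (1 + s) := by
    rw [← Real.div_rpow (by positivity) (by positivity)]
    have := one_add_mul_self_le_rpow_one_add (s := -1 / ((n : ℝ) + 2))
      (by rw [neg_div, neg_le_neg_iff, div_le_one (by positivity)]; linarith) (p := 1 + s)
      (by linarith)
    convert this using 1
    · field_simp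
      ring
    · congr 1
      field_simp
      ring
  have hratio : ‖a + n‖ * ‖b + n‖ / (‖c + n‖ * (n + 1)) ≤ ((n : ℝ) + (1 - s)) / (n + 2) := by
    rw [div_le_div_iff₀ (by positivity) (by positivity)]
    linarith
  rw [norm_hyp2F1Coeff_succ, Nat.cast_succ]
  calc ‖hyp2F1Coeff a b c n‖ * (‖a + n‖ * ‖b + n‖ / (‖c + n‖ * (n + 1)))
        * (((n : ℝ) + 1) ^ (1 + s))⁻¹
      ≤ ‖hyp2F1Coeff a b c n‖ * (((n : ℝ) + 1) ^ (1 + s) / ((n : ℝ) + 2) ^ (1 + s))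
        * (((n : ℝ) + 1) ^ (1 + s))⁻¹ := by
        gcongr _ * ?_ * _
        exact hratio.trans hbernoulli
    _ = ‖hyp2F1Coeff a b c n‖ * (((n : ℝ) + 1 + 1) ^ (1 + s))⁻¹ := by
        field_simp
        ring_nf

lemma norm_hyp2F1Coeff_le (hc : 3 * (1 + ‖a‖) * (1 + ‖b‖) ≤ c.re) (n : ℕ) :
    ‖hyp2F1Coeff a b c n‖ ≤ 2 / (((n : ℝ) + 1) * ((n : ℝ) + 2)) := by
  induction n with
  | zero => norm_num
  | succ n ih =>
    have hR : 0 < 3 * (1 + ‖a‖) * (1 + ‖b‖) := by positivity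
    have hA : ‖a + n‖ ≤ ‖a‖ + n := (norm_add_le _ _).trans_eq (by simp)
    have hB : ‖b + n‖ ≤ ‖b‖ + n := (norm_add_le _ _).trans_eq (by simp)
    have hC : 3 * (1 + ‖a‖) * (1 + ‖b‖) + n ≤ ‖c + n‖ :=
      le_trans (by simpa using hc) (Complex.re_le_norm (c + n))
    have hratio : ‖a + n‖ * ‖b + n‖ / (‖c + n‖ * (n + 1)) ≤ ((n : ℝ) + 1) / (n + 3) := by
      rw [div_le_div_iff₀ (by nlinarith) (by positivity)]
      calc ‖a + n‖ * ‖b + n‖ * (n + 3) ≤ (‖a‖ + n) * (‖b‖ + n) * (n + 3) := by gcongr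
        _ ≤ (3 * (1 + ‖a‖) * (1 + ‖b‖) + n) * ((n + 1) * (n + 1)) := by
          rw [← sub_nonneg]
          have h : (3 * (1 + ‖a‖) * (1 + ‖b‖) + n) * ((n + 1) * (n + 1))
              - (‖a‖ + n) * (‖b‖ + n) * (n + 3) = (n : ℝ) ^ 2 * (2 + 2 * ‖a‖ + 2 * ‖b‖
              + 3 * ‖a‖ * ‖b‖) + n * (7 + 3 * ‖a‖ + 3 * ‖b‖ + 5 * ‖a‖ * ‖b‖)
              + (3 + 3 * ‖a‖ + 3 * ‖b‖) := by ring
          rw [h]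
          positivity
        _ ≤ ‖c + n‖ * ((n + 1) * (n + 1)) := by gcongr
        _ = (n + 1) * (‖c + n‖ * (n + 1)) := by ring
    rw [norm_hyp2F1Coeff_succ]
    calc ‖hyp2F1Coeff a b c n‖ * (‖a + n‖ * ‖b + n‖ / (‖c + n‖ * (n + 1)))
        ≤ 2 / (((n : ℝ) + 1) * ((n : ℝ) + 2)) * (((n : ℝ) + 1) / (n + 3)) := by gcongr
      _ = 2 / (((n + 1 : ℕ) + 1) * ((n + 1 : ℕ) + 2)) := by
        push_cast
        field_simp
        ring

lemma tsum_norm_hyp2F1Coeff_le (hc : 3 * (1 + ‖a‖) * (1 + ‖b‖) ≤ c.re) :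
    ∑' n, ‖hyp2F1Coeff a b c n‖ ≤ ∑' n : ℕ, 2 / (((n : ℝ) + 1) * ((n : ℝ) + 2)) :=
  Summable.tsum_le_tsum (norm_hyp2F1Coeff_le hc)
    (summable_two_div_add_one_mul_add_two.of_nonneg_of_le (fun _ => norm_nonneg _)
      (norm_hyp2F1Coeff_le hc)) summable_two_div_add_one_mul_add_two

variable (a b c) in
lemma tendsto_hyp2F1Coeff_add_natCast (k : ℕ) :
    Tendsto (fun n : ℕ => hyp2F1Coeff a b (c + n) k) atTop (𝓝 (if k = 0 then 1 else 0)) := by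
  induction k with
  | zero => simp
  | succ k ih =>
    simp only [hyp2F1Coeff_succ, if_neg k.succ_ne_zero]
    have h : Tendsto (fun n : ℕ => (a + k) * (b + k) / (k + 1) * (c + k + n)⁻¹) atTop (𝓝 0) := by
      simpa using (tendsto_inv_add_natCast (c + k)).const_mul ((a + k) * (b + k) / (k + 1))
    simpa using ih.mul (h.congr fun n => by simp only [div_eq_mul_inv, mul_inv]; ring)

variable (a b c) in
lemma tendsto_tsum_hyp2F1Coeff_add_natCast :
    Tendsto (fun n : ℕ => ∑' k, hyp2F1Coeff a b (c + n) k) atTop (𝓝 1) := by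
  have h := tendsto_tsum_of_dominated_convergence summable_two_div_add_one_mul_add_two
    (tendsto_hyp2F1Coeff_add_natCast a b c) ?_
  · simpa using h
  filter_upwards [(tendsto_re_add_natCast_atTop c).eventually_ge_atTop
    (3 * (1 + ‖a‖) * (1 + ‖b‖))] with n hn
  exact norm_hyp2F1Coeff_le hn

lemma hyp2F1Coeff_add_one (hc : ∀ k : ℕ, c ≠ -k) (n : ℕ) :
    hyp2F1Coeff a b (c + 1) n = hyp2F1Coeff a b c n * (c / (c + n)) := by
  have h : c * poch (c + 1) n = poch c n * (c + n) := by
    rw [← poch_succ, add_comm n 1, poch_add]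
    simp [poch]
  have hcn := add_natCast_ne_zero hc n
  have hp := poch_ne_zero hc n
  have hp1 : poch (c + 1) n ≠ 0 := poch_ne_zero (by simpa using add_natCast_ne_neg_natCast hc 1) n
  have hf : (n.factorial : ℂ) ≠ 0 := Nat.cast_ne_zero.2 n.factorial_ne_zero
  simp only [hyp2F1Coeff]
  field_simp
  linear_combination -(poch a n * poch b n) * h

lemma hyp2F1Coeff_contiguous (hc : ∀ k : ℕ, c ≠ -k) (n : ℕ) :
    c * (c - a - b) * hyp2F1Coeff a b c n - (c - a) * (c - b) * hyp2F1Coeff a b (c + 1) n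
      = n * (c * hyp2F1Coeff a b c n) - (n + 1 : ℕ) * (c * hyp2F1Coeff a b c (n + 1)) := by
  have hcn := add_natCast_ne_zero hc n
  rw [hyp2F1Coeff_add_one hc, hyp2F1Coeff_succ]
  push_cast
  field_simp
  ring

lemma tsum_hyp2F1Coeff_contiguous (hre : 0 < (c - a - b).re) (hc : ∀ k : ℕ, c ≠ -k) :
    c * (c - a - b) * ∑' n, hyp2F1Coeff a b c n
      = (c - a) * (c - b) * ∑' n, hyp2F1Coeff a b (c + 1) n := by
  have hs := (summable_norm_hyp2F1Coeff hre).of_norm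
  have hs1 := (summable_norm_hyp2F1Coeff (a := a) (b := b) (c := c + 1)
    (by simpa only [Nat.cast_one] using re_sub_sub_add_natCast_pos hre 1)).of_norm
  set f := fun n => c * (c - a - b) * hyp2F1Coeff a b c n
    - (c - a) * (c - b) * hyp2F1Coeff a b (c + 1) n
  have hf : HasSum f (c * (c - a - b) * ∑' n, hyp2F1Coeff a b c n
      - (c - a) * (c - b) * ∑' n, hyp2F1Coeff a b (c + 1) n) :=
    (hs.hasSum.mul_left _).sub (hs1.hasSum.mul_left _)
  have hpartial (n : ℕ) : ∑ j ∈ range n, f j = -(n • (c * hyp2F1Coeff a b c n)) := by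
    simp only [f, hyp2F1Coeff_contiguous hc,
      sum_range_sub' (fun j : ℕ => (j : ℂ) * (c * hyp2F1Coeff a b c j)), nsmul_eq_mul]
    simp
  have hlim := eq_zero_of_summable_of_tendsto_nsmul
    (((summable_norm_hyp2F1Coeff hre).mul_left ‖c‖).congr fun n => (norm_mul _ _).symm)
    (hf.tendsto_sum_nat.neg.congr fun n => by rw [hpartial, neg_neg])
  rwa [neg_eq_zero, sub_eq_zero] at hlim

lemma poch_mul_poch_mul_tsum_hyp2F1Coeff (hre : 0 < (c - a - b).re) (hc : ∀ k : ℕ, c ≠ -k)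
    (n : ℕ) : poch c n * poch (c - a - b) n * ∑' k, hyp2F1Coeff a b c k
      = poch (c - a) n * poch (c - b) n * ∑' k, hyp2F1Coeff a b (c + n) k := by
  induction n with
  | zero => simp
  | succ n ih =>
    have step := tsum_hyp2F1Coeff_contiguous (re_sub_sub_add_natCast_pos hre n)
      (add_natCast_ne_neg_natCast hc n)
    simp only [poch_succ, Nat.cast_succ, ← add_assoc]
    linear_combination (c + n) * (c - a - b + n) * ih + poch (c - a) n * poch (c - b) n * step

lemma GammaSeq_mul_GammaSeq_mul_tsum_hyp2F1Coeff (hre : 0 < (c - a - b).re)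
    (hc : ∀ k : ℕ, c ≠ -k) (hca : ∀ k : ℕ, c - a ≠ -k) (hcb : ∀ k : ℕ, c - b ≠ -k) {n : ℕ}
    (hn : n ≠ 0) :
    Complex.GammaSeq (c - a) n * Complex.GammaSeq (c - b) n * ∑' k, hyp2F1Coeff a b c k
      = Complex.GammaSeq c n * Complex.GammaSeq (c - a - b) n *
        ∑' k, hyp2F1Coeff a b (c + (n + 1 : ℕ)) k := by
  have hpow : (n : ℂ) ^ (c - a) * (n : ℂ) ^ (c - b) = (n : ℂ) ^ c * (n : ℂ) ^ (c - a - b) := by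
    rw [← Complex.cpow_add _ _ (Nat.cast_ne_zero.2 hn),
      ← Complex.cpow_add _ _ (Nat.cast_ne_zero.2 hn)]
    ring_nf
  have hE : (n : ℂ) ^ c * n.factorial * ((n : ℂ) ^ (c - a - b) * n.factorial) ≠ 0 := by
    have : (n.factorial : ℂ) ≠ 0 := Nat.cast_ne_zero.2 n.factorial_ne_zero
    simp [Complex.cpow_eq_zero_iff, hn, this]
  have key := poch_mul_poch_mul_tsum_hyp2F1Coeff hre hc (n + 1)
  have hA := GammaSeq_mul_poch hca n
  have hB := GammaSeq_mul_poch hcb n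
  have hC := GammaSeq_mul_poch hc n
  have hD := GammaSeq_mul_poch (ne_neg_natCast_of_re_pos hre) n
  refine mul_right_cancel₀ hE ?_
  linear_combination
    (Complex.GammaSeq (c - a) n * Complex.GammaSeq (c - b) n * ∑' k, hyp2F1Coeff a b c k) *
        (-(Complex.GammaSeq (c - a - b) n * poch (c - a - b) (n + 1)) * hC
          - (n : ℂ) ^ c * n.factorial * hD)
      + Complex.GammaSeq (c - a) n * Complex.GammaSeq (c - b) n * Complex.GammaSeq c n
          * Complex.GammaSeq (c - a - b) n * key
      + Complex.GammaSeq c n * Complex.GammaSeq (c - a - b) n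
          * (∑' k, hyp2F1Coeff a b (c + (n + 1 : ℕ)) k)
          * (Complex.GammaSeq (c - b) n * poch (c - b) (n + 1) * hA
            + (n : ℂ) ^ (c - a) * n.factorial * hB + (n.factorial : ℂ) ^ 2 * hpow)

/-- Gauss's summation theorem. -/
theorem tsum_hyp2F1Coeff (hre : 0 < (c - a - b).re) (hc : ∀ k : ℕ, c ≠ -k)
    (hca : ∀ k : ℕ, c - a ≠ -k) (hcb : ∀ k : ℕ, c - b ≠ -k) :
    ∑' n, hyp2F1Coeff a b c n = Complex.Gamma c * Complex.Gamma (c - a - b) /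
      (Complex.Gamma (c - a) * Complex.Gamma (c - b)) := by
  have hlim : Tendsto (fun n : ℕ => Complex.GammaSeq c n * Complex.GammaSeq (c - a - b) n *
      ∑' k, hyp2F1Coeff a b (c + (n + 1 : ℕ)) k) atTop
      (𝓝 (Complex.Gamma c * Complex.Gamma (c - a - b) * 1)) :=
    ((Complex.GammaSeq_tendsto_Gamma c).mul (Complex.GammaSeq_tendsto_Gamma _)).mul
      ((tendsto_tsum_hyp2F1Coeff_add_natCast a b c).comp (tendsto_add_atTop_nat 1))
  have hlim' := ((Complex.GammaSeq_tendsto_Gamma (c - a)).mul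
    (Complex.GammaSeq_tendsto_Gamma (c - b))).mul_const (∑' n, hyp2F1Coeff a b c n)
  have h := tendsto_nhds_unique hlim' (hlim.congr' (eventually_atTop.2 ⟨1, fun n hn =>
    (GammaSeq_mul_GammaSeq_mul_tsum_hyp2F1Coeff hre hc hca hcb (by omega)).symm⟩))
  rw [eq_div_iff (mul_ne_zero (Complex.Gamma_ne_zero hca) (Complex.Gamma_ne_zero hcb))]
  linear_combination h

lemma tsum_hyp2F1Coeff_add_natCast (hre : 0 < (c - a - b).re) (hc : ∀ k : ℕ, c ≠ -k)
    (hca : ∀ k : ℕ, c - a ≠ -k) (hcb : ∀ k : ℕ, c - b ≠ -k) (n : ℕ) :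
    ∑' k, hyp2F1Coeff a b (c + n) k = Complex.Gamma c * Complex.Gamma (c - a - b) /
      (Complex.Gamma (c - a) * Complex.Gamma (c - b)) *
      (poch c n * poch (c - a - b) n / (poch (c - a) n * poch (c - b) n)) := by
  have hcab := ne_neg_natCast_of_re_pos hre
  rw [tsum_hyp2F1Coeff (re_sub_sub_add_natCast_pos hre n) (add_natCast_ne_neg_natCast hc n)
    (by simpa [add_sub_right_comm] using add_natCast_ne_neg_natCast hca n)
    (by simpa [add_sub_right_comm] using add_natCast_ne_neg_natCast hcb n),
    show c + n - a - b = c - a - b + n by ring, show c + n - a = c - a + n by ring,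
    show c + n - b = c - b + n by ring, Gamma_add_natCast hc, Gamma_add_natCast hcab,
    Gamma_add_natCast hca, Gamma_add_natCast hcb]
  have := poch_ne_zero hca n
  have := poch_ne_zero hcb n
  field_simp

variable (a b) in
lemma summable_norm_hyp2F1Coeff_mul_pow {x : ℂ} (hc : ∀ k : ℕ, c ≠ -k) (hx : ‖x‖ < 1) :
    Summable fun n => ‖hyp2F1Coeff a b c n * x ^ n‖ := by
  have hmem : x ∈ Metric.eball (0 : ℂ) (Complex.regularizedGaussHGFunSeries a b c).radius := by
    refine lt_of_lt_of_le ?_ (Complex.radius_regularizedGaussHGFunSeries_ge_one a b c)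
    simpa [edist_zero_right, enorm_eq_nnnorm, ← NNReal.coe_lt_one] using hx
  refine (((Complex.regularizedGaussHGFunSeries a b c).summable_norm_apply hmem).mul_left
    ‖Complex.Gamma c‖).congr fun n => ?_
  rw [FormalMultilinearSeries.apply_eq_pow_smul_coeff, Complex.coeff_regularizedGaussHGFunSeries,
    ← poch_eq_eval_ascPochhammer, ← poch_eq_eval_ascPochhammer, Gamma_add_natCast hc, hyp2F1Coeff,
    smul_eq_mul, ← norm_mul]
  have := Complex.Gamma_ne_zero hc
  have := poch_ne_zero hc n
  congr 1
  field_simp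

end hyp2F1Coeff

lemma appellF3Term_one (a₁ a₂ b₁ b₂ c x : ℂ) (i j : ℕ) : appellF3Term a₁ a₂ b₁ b₂ c x 1 (i, j)
    = hyp2F1Coeff a₁ b₁ c i * x ^ i * hyp2F1Coeff a₂ b₂ (c + i) j := by
  rw [appellF3Term, hyp2F1Coeff, hyp2F1Coeff, poch_add, one_pow, mul_one]
  ring

lemma summable_norm_appellF3Term_one (a₁ b₁ : ℂ) {a₂ b₂ c x : ℂ} (hre : 0 < (c - a₂ - b₂).re)
    (hc : ∀ k : ℕ, c ≠ -k) (hx : ‖x‖ < 1) :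
    Summable fun p => ‖appellF3Term a₁ a₂ b₁ b₂ c x 1 p‖ := by
  refine (summable_prod_of_nonneg fun _ => norm_nonneg _).2 ⟨fun i => ?_, ?_⟩
  · simpa only [appellF3Term_one, norm_mul] using
      (summable_norm_hyp2F1Coeff (re_sub_sub_add_natCast_pos hre i)).mul_left _
  refine Summable.of_norm_bounded_eventually_nat
    ((summable_norm_hyp2F1Coeff_mul_pow a₁ b₁ hc hx).mul_right
      (∑' n : ℕ, 2 / (((n : ℝ) + 1) * ((n : ℝ) + 2)))) ?_
  filter_upwards [(tendsto_re_add_natCast_atTop c).eventually_ge_atTop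
    (3 * (1 + ‖a₂‖) * (1 + ‖b₂‖))] with i hi
  simp only [appellF3Term_one, norm_mul, tsum_mul_left, norm_norm]
  rw [Real.norm_of_nonneg (tsum_nonneg fun _ => norm_nonneg _)]
  exact mul_le_mul_of_nonneg_left (tsum_norm_hyp2F1Coeff_le hi) (by positivity)

theorem stmt_9 (a₁ a₂ b₁ b₂ c x : ℂ) (hre : 0 < (c - a₂ - b₂).re)
    (hc : ∀ k : ℕ, c ≠ -(k : ℂ)) (hca : ∀ k : ℕ, c - a₂ ≠ -(k : ℂ))
    (hcb : ∀ k : ℕ, c - b₂ ≠ -(k : ℂ)) (hx : ‖x‖ < 1) :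
    Summable (appellF3Term a₁ a₂ b₁ b₂ c x 1) ∧
    appellF3 a₁ a₂ b₁ b₂ c x 1 =
      Complex.Gamma c * Complex.Gamma (c - a₂ - b₂) /
        (Complex.Gamma (c - a₂) * Complex.Gamma (c - b₂)) *
        hyp3F2 a₁ b₁ (c - a₂ - b₂) (c - a₂) (c - b₂) x := by
  have hsum := (summable_norm_appellF3Term_one a₁ b₁ hre hc hx).of_norm
  refine ⟨hsum, ?_⟩
  have hrow (i : ℕ) : ∑' j, appellF3Term a₁ a₂ b₁ b₂ c x 1 (i, j)
      = Complex.Gamma c * Complex.Gamma (c - a₂ - b₂) /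
        (Complex.Gamma (c - a₂) * Complex.Gamma (c - b₂)) *
        (poch a₁ i * poch b₁ i * poch (c - a₂ - b₂) i /
          (poch (c - a₂) i * poch (c - b₂) i * i.factorial) * x ^ i) := by
    rw [tsum_congr fun j => appellF3Term_one .., tsum_mul_left,
      tsum_hyp2F1Coeff_add_natCast hre hc hca hcb, hyp2F1Coeff]
    have := poch_ne_zero hc i
    field_simp
  rw [appellF3, hsum.tsum_prod' hsum.prod_factor, tsum_congr hrow, tsum_mul_left, hyp3F2]
end
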